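/- arXiv:1503.05028 — 3 statements merged into one kernel-verified Lean document; each statement's English description precedes it below -/
import Mathlib

section
/- Every unit vector a ∈ ℂⁿ can be written, after multiplication by a suitable phase e^{iψ}, in the form cos(θ) u + i sin(θ) v, where u, v ∈ ℝⁿ satisfy |u| = |v| = 1, u·v = 0, and θ ∈ [0, π/4], except in the degenerate case where the imaginary part can be made zero (θ = 0, v arbitrary orthonormal completion). -/
/-! Multiplying `a` by `e^{iψ}` with `2ψ = -arg (∑ aᵢ²)` makes `∑ bᵢ²` equal to `‖∑ aᵢ²‖`, a
nonnegative real. For `x = Re b`, `y = Im b` this says `|x|² - |y|² ≥ 0` and `x ⬝ y = 0`, while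
`|x|² + |y|² = 1`. Hence `|x| = cos θ`, `|y| = sin θ` for the `θ ∈ [0, π/4]` with
`cos 2θ = |x|² - |y|²`, and `u`, `v` are `x`, `y` normalized; when `y = 0`, `v` is any unit vector
orthogonal to `u`, which exists as `n ≥ 2`. -/

open Finset Real

lemma exists_norm_eq_one_inner_eq_zero {E : Type*} [NormedAddCommGroup E] [InnerProductSpace ℝ E]
    [FiniteDimensional ℝ E] (hE : 2 ≤ Module.finrank ℝ E) (u : E) :
    ∃ v : E, ‖v‖ = 1 ∧ inner ℝ u v = 0 := by
  have hspan : Module.finrank ℝ (ℝ ∙ u) ≤ 1 := by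
    simpa using finrank_span_le_card (R := ℝ) ({u} : Set E)
  have hdim := (ℝ ∙ u).finrank_add_finrank_orthogonal
  have : Nontrivial (ℝ ∙ u)ᗮ := Module.nontrivial_of_finrank_pos (R := ℝ) (by omega)
  obtain ⟨v, hv⟩ := exists_norm_eq (ℝ ∙ u)ᗮ zero_le_one
  exact ⟨v, hv, Submodule.inner_right_of_mem_orthogonal (Submodule.mem_span_singleton_self u) v.2⟩

section RealVectors

variable {ι : Type*} [Fintype ι]

lemma exists_sum_sq_eq_one_sum_mul_eq_zero (hι : 2 ≤ Fintype.card ι) (u : ι → ℝ) :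
    ∃ v : ι → ℝ, ∑ i, v i ^ 2 = 1 ∧ ∑ i, u i * v i = 0 := by
  obtain ⟨v, hv, huv⟩ := exists_norm_eq_one_inner_eq_zero
    (by simpa using hι : 2 ≤ Module.finrank ℝ (EuclideanSpace ℝ ι)) (WithLp.toLp 2 u)
  refine ⟨v, ?_, ?_⟩
  · simpa [hv] using (EuclideanSpace.real_norm_sq_eq v).symm
  · simpa [PiLp.inner_apply, mul_comm] using huv

lemma exists_sum_sq_eq_one_mul_eq {s : ℝ} (hs : s ≠ 0) {x : ι → ℝ}
    (hx : ∑ i, x i ^ 2 = s ^ 2) : ∃ u : ι → ℝ, ∑ i, u i ^ 2 = 1 ∧ ∀ i, s * u i = x i := by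
  refine ⟨fun i => x i / s, ?_, fun i => mul_div_cancel₀ _ hs⟩
  simp only [div_pow, ← sum_div, hx]
  exact div_self (pow_ne_zero 2 hs)

lemma exists_orthonormal_mul_eq_of_sum_mul_eq_zero (hι : 2 ≤ Fintype.card ι) {x y : ι → ℝ}
    {c s : ℝ} (hc : c ≠ 0) (hx : ∑ i, x i ^ 2 = c ^ 2) (hy : ∑ i, y i ^ 2 = s ^ 2)
    (hxy : ∑ i, x i * y i = 0) :
    ∃ u v : ι → ℝ, ∑ i, u i ^ 2 = 1 ∧ ∑ i, v i ^ 2 = 1 ∧ ∑ i, u i * v i = 0 ∧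
      (∀ i, c * u i = x i) ∧ ∀ i, s * v i = y i := by
  obtain ⟨u, hu, hxu⟩ := exists_sum_sq_eq_one_mul_eq hc hx
  by_cases hs : s = 0
  · subst hs
    have hy0 : ∀ i, y i = 0 := fun i => pow_eq_zero_iff two_ne_zero |>.mp <|
      (sum_eq_zero_iff_of_nonneg fun i _ => sq_nonneg (y i)).mp (by simpa using hy) i (mem_univ i)
    obtain ⟨v, hv, huv⟩ := exists_sum_sq_eq_one_sum_mul_eq_zero hι u
    exact ⟨u, v, hu, hv, huv, hxu, fun i => by simp [hy0]⟩
  · obtain ⟨v, hv, hyv⟩ := exists_sum_sq_eq_one_mul_eq hs hy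
    have huv : c * s * ∑ i, u i * v i = 0 := by
      rw [← hxy, mul_sum]
      exact sum_congr rfl fun i _ => by rw [← hxu, ← hyv]; ring
    exact ⟨u, v, hu, hv, by simpa [hc, hs] using huv, hxu, hyv⟩

end RealVectors

lemma exists_mem_Icc_cos_sq_sin_sq {X Y : ℝ} (hY : 0 ≤ Y) (hYX : Y ≤ X) (hXY : X + Y = 1) :
    ∃ θ ∈ Set.Icc 0 (π / 4), cos θ ^ 2 = X ∧ sin θ ^ 2 = Y := by
  have hcos : cos (arccos (X - Y)) = X - Y := cos_arccos (by linarith) (by linarith)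
  refine ⟨arccos (X - Y) / 2, ⟨div_nonneg (arccos_nonneg _) zero_le_two, ?_⟩, ?_, ?_⟩
  · linarith [arccos_le_pi_div_two.mpr (sub_nonneg.mpr hYX)]
  · rw [cos_sq, mul_div_cancel₀ _ two_ne_zero, hcos]; linarith
  · rw [sin_sq_eq_half_sub, mul_div_cancel₀ _ two_ne_zero, hcos]; linarith

namespace Complex

lemma exists_exp_I_mul_sq_mul_eq_norm (z : ℂ) : ∃ ψ : ℝ, exp (I * ψ) ^ 2 * z = ‖z‖ := by
  refine ⟨-z.arg / 2, ?_⟩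
  calc exp (I * ↑(-z.arg / 2)) ^ 2 * z = exp (-(z.arg * I)) * (‖z‖ * exp (z.arg * I)) := by
        rw [norm_mul_exp_arg_mul_I, ← exp_nat_mul]; push_cast; ring_nf
    _ = ‖z‖ := by rw [mul_left_comm, ← exp_add, neg_add_cancel, exp_zero, mul_one]

variable {ι : Type*} [Fintype ι]

lemma re_sum_sq (b : ι → ℂ) : (∑ i, b i ^ 2).re = ∑ i, (b i).re ^ 2 - ∑ i, (b i).im ^ 2 := by
  simp [re_sum, sq, ← sum_sub_distrib]

lemma im_sum_sq (b : ι → ℂ) : (∑ i, b i ^ 2).im = 2 * ∑ i, (b i).re * (b i).im := by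
  simp only [sq, im_sum, mul_im, mul_sum]
  exact sum_congr rfl fun i _ => by ring

lemma sum_re_sq_add_sum_im_sq (b : ι → ℂ) :
    ∑ i, (b i).re ^ 2 + ∑ i, (b i).im ^ 2 = ∑ i, normSq (b i) := by
  simp [normSq_apply, sq, ← sum_add_distrib]

end Complex

open Complex in
/-- Canonical form: every unit vector `a ∈ ℂⁿ` (`n ≥ 2`) can be written, after
multiplication by a suitable phase `e^{iψ}`, as `cos(θ) u + i sin(θ) v` with
`u, v` real orthonormal vectors and `θ ∈ [0, π/4]`. -/
theorem canonical_form_unit_vector {n : ℕ} (hn : 2 ≤ n) (a : Fin n → ℂ)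
    (ha : ∑ i, Complex.normSq (a i) = 1) :
    ∃ (ψ θ : ℝ) (u v : Fin n → ℝ),
      θ ∈ Set.Icc 0 (Real.pi / 4) ∧
      (∑ i, u i ^ 2 = 1) ∧ (∑ i, v i ^ 2 = 1) ∧ (∑ i, u i * v i = 0) ∧
      (∀ i, Complex.exp (Complex.I * ψ) * a i =
        Real.cos θ * u i + Complex.I * (Real.sin θ * v i)) := by
  obtain ⟨ψ, hψ⟩ := exists_exp_I_mul_sq_mul_eq_norm (∑ i, a i ^ 2)
  set b : Fin n → ℂ := fun i => exp (I * ψ) * a i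
  have hb : ∑ i, b i ^ 2 = ‖∑ i, a i ^ 2‖ := by simp only [b, mul_pow, ← mul_sum, hψ]
  have hsum : ∑ i, (b i).re ^ 2 + ∑ i, (b i).im ^ 2 = 1 := by
    rw [sum_re_sq_add_sum_im_sq, ← ha]
    refine sum_congr rfl fun i _ => ?_
    rw [normSq_mul, normSq_eq_norm_sq, norm_exp_I_mul_ofReal, one_pow, one_mul]
  have hdiff := re_sum_sq b
  have horth := im_sum_sq b
  rw [hb, ofReal_re] at hdiff
  rw [hb, ofReal_im, zero_eq_mul] at horth
  obtain ⟨θ, hθ, hcos, hsin⟩ := exists_mem_Icc_cos_sq_sin_sq (sum_nonneg fun i _ => sq_nonneg _)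
    (by linarith [norm_nonneg (∑ i, a i ^ 2)]) hsum
  have hcos_pos : 0 < Real.cos θ :=
    Real.cos_pos_of_mem_Ioo ⟨by linarith [hθ.1, pi_pos], by linarith [hθ.2, pi_pos]⟩
  obtain ⟨u, v, hu, hv, huv, hxu, hyv⟩ := exists_orthonormal_mul_eq_of_sum_mul_eq_zero
    (by simpa using hn) hcos_pos.ne' hcos.symm hsin.symm (horth.resolve_left two_ne_zero)
  refine ⟨ψ, θ, u, v, hθ, hu, hv, huv, fun i => ?_⟩
  rw [← re_add_im (exp (I * ψ) * a i), ← hxu i, ← hyv i]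
  push_cast
  ring
end

section
/- Suppose a = cos(θ) u + i sin(θ) v and a' = cos(θ') u' + i sin(θ') v' with u, v, u', v' ∈ ℝⁿ orthonormal pairs (|u|=|v|=|u'|=|v'|=1, u·v = u'·v' = 0), θ, θ' ∈ [0, π/4), and suppose e^{iψ} G a = a' for some ψ ∈ ℝ and some real orthogonal matrix G ∈ O(n). Then θ' = θ and, if θ > 0, e^{iψ} = ±1, G u = ± u', and G v = ± v' (with matching signs). -/
open Matrix

private lemma combo_sum {n : ℕ} (w x : Fin n → ℝ)
    (hw : ∑ i, w i ^ 2 = 1) (hx : ∑ i, x i ^ 2 = 1) (hwx : ∑ i, w i * x i = 0)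
    (a b c d : ℝ) :
    ∑ i, (a * w i + b * x i) * (c * w i + d * x i) = a * c + b * d := by
  have h : ∀ i : Fin n, (a * w i + b * x i) * (c * w i + d * x i)
      = (a*c) * w i ^ 2 + (a*d + b*c) * (w i * x i) + (b*d) * x i ^ 2 := fun i => by ring
  simp_rw [h, Finset.sum_add_distrib, ← Finset.mul_sum, hw, hx, hwx]
  ring

/-- Rigidity of the canonical form: if two canonical-form unit vectors
`a = cos θ u + i sin θ v` and `a' = cos θ' u' + i sin θ' v'` (with `θ, θ' ∈ [0, π/4)`)
are related by a phase and a real orthogonal matrix, `e^{iψ} G a = a'`, then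
`θ' = θ` and, when `θ > 0`, the phase is `±1` with `G u = ± u'`, `G v = ± v'`
(matching signs). -/
theorem canonical_form_rigidity {n : ℕ}
    (u v u' v' : Fin n → ℝ)
    (hu : ∑ i, u i ^ 2 = 1) (hv : ∑ i, v i ^ 2 = 1) (huv : ∑ i, u i * v i = 0)
    (hu' : ∑ i, u' i ^ 2 = 1) (hv' : ∑ i, v' i ^ 2 = 1) (hu'v' : ∑ i, u' i * v' i = 0)
    (θ θ' : ℝ) (hθ : θ ∈ Set.Ico 0 (Real.pi / 4)) (hθ' : θ' ∈ Set.Ico 0 (Real.pi / 4))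
    (ψ : ℝ) (G : Matrix (Fin n) (Fin n) ℝ)
    (hG : G ∈ Matrix.orthogonalGroup (Fin n) ℝ)
    (hrel : ∀ i, Complex.exp (Complex.I * ψ) *
        ((Real.cos θ : ℂ) * (G.mulVec u i : ℝ) + Complex.I * ((Real.sin θ : ℂ) * (G.mulVec v i : ℝ)))
      = (Real.cos θ' : ℂ) * (u' i : ℝ) + Complex.I * ((Real.sin θ' : ℂ) * (v' i : ℝ))) :
    θ' = θ ∧
    (0 < θ → ∃ ε : ℝ, (ε = 1 ∨ ε = -1) ∧
      Complex.exp (Complex.I * ψ) = (ε : ℂ) ∧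
      G.mulVec u = ε • u' ∧ G.mulVec v = ε • v') := by
  set w : Fin n → ℝ := G.mulVec u with hw_def
  set x : Fin n → ℝ := G.mulVec v with hx_def
  -- orthogonality is preserved
  have hGt : Gᵀ * G = 1 := by
    have := Matrix.mem_orthogonalGroup_iff' (Fin n) ℝ |>.mp hG
    simpa using this
  have hdot : ∀ (p q : Fin n → ℝ), (G.mulVec p) ⬝ᵥ (G.mulVec q) = p ⬝ᵥ q := by
    intro p q
    rw [Matrix.dotProduct_mulVec, ← Matrix.vecMul_transpose, Matrix.vecMul_vecMul, hGt,
      Matrix.vecMul_one]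
  have hw2 : ∑ i, w i ^ 2 = 1 := by
    have := hdot u u
    simpa [dotProduct, ← sq, hw_def] using this.trans (by simpa [dotProduct, ← sq] using hu)
  have hx2 : ∑ i, x i ^ 2 = 1 := by
    have := hdot v v
    simpa [dotProduct, ← sq, hx_def] using this.trans (by simpa [dotProduct, ← sq] using hv)
  have hwx : ∑ i, w i * x i = 0 := by
    have := hdot u v
    simpa [dotProduct, hw_def, hx_def] using this.trans (by simpa [dotProduct] using huv)
  set c := Real.cos ψ with hc_def
  set s := Real.sin ψ with hs_def
  have hexp : Complex.exp (Complex.I * ψ) = (c : ℂ) + (s : ℂ) * Complex.I := by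
    rw [mul_comm, Complex.exp_mul_I, Complex.ofReal_cos, Complex.ofReal_sin]
  -- real and imaginary parts
  have hre : ∀ i, (c * Real.cos θ) * w i + (-(s * Real.sin θ)) * x i = Real.cos θ' * u' i := by
    intro i
    have h := hrel i
    rw [hexp] at h
    have h1 := congrArg Complex.re h
    simp [Complex.cos_ofReal_re, Complex.sin_ofReal_re] at h1
    linear_combination h1
  have him : ∀ i, (s * Real.cos θ) * w i + (c * Real.sin θ) * x i = Real.sin θ' * v' i := by
    intro i
    have h := hrel i
    rw [hexp] at h
    have h2 := congrArg Complex.im h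
    simp [Complex.cos_ofReal_re, Complex.sin_ofReal_re] at h2
    linear_combination h2
  -- sum of squares identities
  have E1 : (c * Real.cos θ)^2 + (s * Real.sin θ)^2 = Real.cos θ' ^ 2 := by
    have hcs := combo_sum w x hw2 hx2 hwx (c * Real.cos θ) (-(s * Real.sin θ))
      (c * Real.cos θ) (-(s * Real.sin θ))
    have h1 : ∑ i, ((c * Real.cos θ) * w i + (-(s * Real.sin θ)) * x i) *
        ((c * Real.cos θ) * w i + (-(s * Real.sin θ)) * x i)
        = Real.cos θ' ^ 2 * ∑ i, u' i ^ 2 := by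
      rw [Finset.mul_sum]
      refine Finset.sum_congr rfl fun i _ => by rw [hre i]; ring
    rw [hu', mul_one] at h1
    linear_combination hcs.symm.trans h1
  have E2 : (s * Real.cos θ)^2 + (c * Real.sin θ)^2 = Real.sin θ' ^ 2 := by
    have hcs := combo_sum w x hw2 hx2 hwx (s * Real.cos θ) (c * Real.sin θ)
      (s * Real.cos θ) (c * Real.sin θ)
    have h1 : ∑ i, ((s * Real.cos θ) * w i + (c * Real.sin θ) * x i) *
        ((s * Real.cos θ) * w i + (c * Real.sin θ) * x i)
        = Real.sin θ' ^ 2 * ∑ i, v' i ^ 2 := by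
      rw [Finset.mul_sum]
      refine Finset.sum_congr rfl fun i _ => by rw [him i]; ring
    rw [hv', mul_one] at h1
    linear_combination hcs.symm.trans h1
  have E3 : (c * Real.cos θ) * (s * Real.cos θ) + (-(s * Real.sin θ)) * (c * Real.sin θ) = 0 := by
    have hcs := combo_sum w x hw2 hx2 hwx (c * Real.cos θ) (-(s * Real.sin θ))
      (s * Real.cos θ) (c * Real.sin θ)
    have h1 : ∑ i, ((c * Real.cos θ) * w i + (-(s * Real.sin θ)) * x i) *
        ((s * Real.cos θ) * w i + (c * Real.sin θ) * x i)
        = (Real.cos θ' * Real.sin θ') * ∑ i, u' i * v' i := by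
      rw [Finset.mul_sum]
      refine Finset.sum_congr rfl fun i _ => by rw [hre i, him i]; ring
    rw [hu'v', mul_zero] at h1
    linear_combination hcs.symm.trans h1
  -- trig facts
  have pi_pos := Real.pi_pos
  obtain ⟨hθ0, hθ4⟩ := hθ
  obtain ⟨hθ'0, hθ'4⟩ := hθ'
  have hsinθ_lt_cos : Real.sin θ < Real.cos θ := by
    rw [← Real.sin_pi_div_two_sub]
    apply Real.strictMonoOn_sin ⟨by linarith, by linarith⟩ ⟨by linarith, by linarith⟩
    linarith
  have hsinθ'_lt_cos : Real.sin θ' < Real.cos θ' := by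
    rw [← Real.sin_pi_div_two_sub]
    apply Real.strictMonoOn_sin ⟨by linarith, by linarith⟩ ⟨by linarith, by linarith⟩
    linarith
  have hsθ0 : 0 ≤ Real.sin θ := Real.sin_nonneg_of_nonneg_of_le_pi hθ0 (by linarith)
  have hsθ'0 : 0 ≤ Real.sin θ' := Real.sin_nonneg_of_nonneg_of_le_pi hθ'0 (by linarith)
  have hk : Real.sin θ ^ 2 < Real.cos θ ^ 2 := by nlinarith
  have hk' : Real.sin θ' ^ 2 < Real.cos θ' ^ 2 := by nlinarith
  have hcs1 : s ^ 2 + c ^ 2 = 1 := Real.sin_sq_add_cos_sq ψ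
  -- s = 0
  have hs0 : s = 0 := by
    have h3 : (c * s) * (Real.cos θ ^ 2 - Real.sin θ ^ 2) = 0 := by linear_combination E3
    rcases mul_eq_zero.mp h3 with h | h
    · rcases mul_eq_zero.mp h with h | h
      · -- c = 0 leads to contradiction
        exfalso
        have hc2 : c ^ 2 = 0 := by rw [h]; ring
        have hs2 : s ^ 2 = 1 := by linarith
        have e1 : Real.cos θ' ^ 2 = Real.sin θ ^ 2 := by
          linear_combination (-1 : ℝ) * E1 + Real.cos θ ^ 2 * hc2 + Real.sin θ ^ 2 * hs2
        have e2 : Real.sin θ' ^ 2 = Real.cos θ ^ 2 := by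
          linear_combination (-1 : ℝ) * E2 + Real.sin θ ^ 2 * hc2 + Real.cos θ ^ 2 * hs2
        linarith
      · exact h
    · linarith
  have hc2 : c ^ 2 = 1 := by linear_combination hcs1 - s * hs0
  -- θ' = θ
  have hsin2 : Real.sin θ' ^ 2 = Real.sin θ ^ 2 := by
    linear_combination (-1 : ℝ) * E2 + Real.sin θ ^ 2 * hc2 + (s + 0) * Real.cos θ ^ 2 * hs0
  have hsin_eq : Real.sin θ' = Real.sin θ := by
    have hfac : (Real.sin θ' - Real.sin θ) * (Real.sin θ' + Real.sin θ) = 0 := by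
      linear_combination hsin2
    rcases mul_eq_zero.mp hfac with h | h
    · linarith
    · linarith
  have hθeq : θ' = θ := by
    have m1 : θ' ∈ Set.Icc (-(Real.pi / 2)) (Real.pi / 2) :=
      Set.mem_Icc.mpr ⟨by linarith, by linarith⟩
    have m2 : θ ∈ Set.Icc (-(Real.pi / 2)) (Real.pi / 2) :=
      Set.mem_Icc.mpr ⟨by linarith, by linarith⟩
    exact Real.injOn_sin m1 m2 hsin_eq
  refine ⟨hθeq, fun hθpos => ?_⟩
  refine ⟨c, ?_, ?_, ?_, ?_⟩
  · have hfac : (c - 1) * (c + 1) = 0 := by linear_combination hc2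
    rcases mul_eq_zero.mp hfac with h | h
    · left; linarith
    · right; linarith
  · rw [hexp, hs0]; push_cast; ring
  · funext i
    have h := hre i
    have hcosθ : (0:ℝ) < Real.cos θ := by linarith
    have h2 : Real.cos θ * w i = Real.cos θ * (c * u' i) := by
      rw [hθeq] at h
      linear_combination c * h - (Real.cos θ * w i) * hc2 + (c * Real.sin θ * x i) * hs0
    have := mul_left_cancel₀ (ne_of_gt hcosθ) h2
    simpa using this
  · funext i
    have h := him i
    have hsinθ : (0:ℝ) < Real.sin θ := Real.sin_pos_of_pos_of_lt_pi hθpos (by linarith)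
    have h2 : Real.sin θ * x i = Real.sin θ * (c * v' i) := by
      rw [hθeq] at h
      linear_combination c * h - (Real.sin θ * x i) * hc2 - (c * Real.cos θ * w i) * hs0
    have := mul_left_cancel₀ (ne_of_gt hsinθ) h2
    simpa using this
end

section
/- Let L₁,…,L_m be bounded operators on a Banach space with ‖Lⱼ‖ ≤ Λ for all j, and let S₂(λ) = (∏_{j=1}^m e^{(λ/2) Lⱼ})(∏_{j=m}^1 e^{(λ/2) Lⱼ}). Then ‖e^{λ Σⱼ Lⱼ} − S₂(λ)‖ ≤ C (m Λ |λ|)³ e^{m Λ |λ|} for an absolute constant C; in particular the symmetric Trotter splitting has local error of third order in λ. -/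
/-!
Call `a` majorized by `x` with jet `(a₁, a₂)` if `a = 1 + a₁ + a₂ + r` where `‖a₁‖`, `‖a₂‖` and
`‖r‖` are bounded by the corresponding pieces `x`, `x²/2` and `eˣ - (1 + x + x²/2)` of the
exponential series. This is stable under products: majorants add and jets multiply as truncated
series. Hence `exp w` is majorized by `‖w‖` with jet `(w, w²/2)`, and, since the Strang product of
`w :: l` is `e^w S(l) e^w`, induction shows that `S(l)` is majorized by `2 ∑ ‖wⱼ‖` with the jet
`(2∑wⱼ, (2∑wⱼ)²/2)` of `exp (2∑wⱼ)`: symmetrization cancels the second-order commutators. The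
error is thus at most twice the cubic remainder `eˣ - (1 + x + x²/2) ≤ x³eˣ/6` at `x = mΛ|λ|`.
-/

open NormedSpace

open Nat in
theorem Real.exp_sub_quadratic_eq_tsum (x : ℝ) :
    Real.exp x - (1 + x + x ^ 2 / 2) = ∑' n : ℕ, x ^ (n + 3) / (n + 3)! := by
  rw [Real.exp_eq_exp_ℝ, exp_eq_tsum_div]
  beta_reduce
  rw [← (Real.summable_pow_div_factorial x).sum_add_tsum_nat_add 3]
  norm_num [Finset.sum_range_succ]

open Nat in
theorem Real.exp_sub_quadratic_le {x : ℝ} (hx : 0 ≤ x) :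
    Real.exp x - (1 + x + x ^ 2 / 2) ≤ x ^ 3 * Real.exp x / 6 := by
  have hs := Real.summable_pow_div_factorial x
  rw [exp_sub_quadratic_eq_tsum, Real.exp_eq_exp_ℝ, exp_eq_tsum_div, ← tsum_mul_left,
    ← tsum_div_const]
  refine Summable.tsum_le_tsum (fun n => ?_) ((summable_nat_add_iff 3).2 hs)
    ((hs.mul_left _).div_const _)
  have hfact : (6 * n ! : ℝ) ≤ (n + 3)! := by
    have := Nat.le_of_dvd (Nat.factorial_pos _) (Nat.factorial_mul_factorial_dvd_factorial_add 3 n)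
    rw [add_comm 3 n] at this
    exact_mod_cast this
  calc x ^ (n + 3) / (n + 3)! ≤ x ^ (n + 3) / (6 * n !) := by gcongr
    _ = x ^ 3 * (x ^ n / n !) / 6 := by ring

theorem Real.exp_sub_quadratic_le_of_le {x y : ℝ} (hx : 0 ≤ x) (hxy : x ≤ y) :
    Real.exp x - (1 + x + x ^ 2 / 2) ≤ y ^ 3 * Real.exp y / 6 :=
  (exp_sub_quadratic_le hx).trans (by gcongr; exact pow_nonneg (hx.trans hxy) 3)

section Majorant

variable {A : Type*} [NormedRing A]

structure IsExpMajorized (a a₁ a₂ : A) (x : ℝ) : Prop where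
  norm_first_le : ‖a₁‖ ≤ x
  norm_second_le : ‖a₂‖ ≤ x ^ 2 / 2
  norm_remainder_le : ‖a - (1 + a₁ + a₂)‖ ≤ Real.exp x - (1 + x + x ^ 2 / 2)

theorem isExpMajorized_one : IsExpMajorized (1 : A) 0 0 0 := ⟨by simp, by simp, by simp⟩

namespace IsExpMajorized

variable {a b a₁ a₂ b₁ b₂ : A} {x y : ℝ}

theorem norm_sub_one_sub_le (h : IsExpMajorized a a₁ a₂ x) :
    ‖a - (1 + a₁)‖ ≤ Real.exp x - (1 + x) :=
  calc ‖a - (1 + a₁)‖ = ‖(a - (1 + a₁ + a₂)) + a₂‖ := by congr 1; abel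
    _ ≤ (Real.exp x - (1 + x + x ^ 2 / 2)) + x ^ 2 / 2 :=
      norm_add_le_of_le h.norm_remainder_le h.norm_second_le
    _ = Real.exp x - (1 + x) := by ring

theorem norm_sub_one_le (h : IsExpMajorized a a₁ a₂ x) : ‖a - 1‖ ≤ Real.exp x - 1 :=
  calc ‖a - 1‖ = ‖(a - (1 + a₁)) + a₁‖ := by congr 1; abel
    _ ≤ (Real.exp x - (1 + x)) + x := norm_add_le_of_le h.norm_sub_one_sub_le h.norm_first_le
    _ = Real.exp x - 1 := by ring

theorem norm_le (h1 : ‖(1 : A)‖ ≤ 1) (h : IsExpMajorized a a₁ a₂ x) : ‖a‖ ≤ Real.exp x :=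
  calc ‖a‖ = ‖(a - 1) + 1‖ := by rw [sub_add_cancel]
    _ ≤ (Real.exp x - 1) + 1 := norm_add_le_of_le h.norm_sub_one_le h1
    _ = Real.exp x := by ring

theorem mul (h1 : ‖(1 : A)‖ ≤ 1) (ha : IsExpMajorized a a₁ a₂ x)
    (hb : IsExpMajorized b b₁ b₂ y) :
    IsExpMajorized (a * b) (a₁ + b₁) (a₂ + a₁ * b₁ + b₂) (x + y) where
  norm_first_le := norm_add_le_of_le ha.norm_first_le hb.norm_first_le
  norm_second_le :=
    calc ‖a₂ + a₁ * b₁ + b₂‖ ≤ x ^ 2 / 2 + x * y + y ^ 2 / 2 :=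
          norm_add₃_le.trans <| add_le_add_three ha.norm_second_le
            (norm_mul_le_of_le ha.norm_first_le hb.norm_first_le) hb.norm_second_le
      _ = (x + y) ^ 2 / 2 := by ring
  norm_remainder_le :=
    calc ‖a * b - (1 + (a₁ + b₁) + (a₂ + a₁ * b₁ + b₂))‖
        = ‖a * (b - (1 + b₁ + b₂)) + (a - (1 + a₁ + a₂)) + (a - (1 + a₁)) * b₁
            + (a - 1) * b₂‖ := by congr 1; noncomm_ring
      _ ≤ Real.exp x * (Real.exp y - (1 + y + y ^ 2 / 2)) + (Real.exp x - (1 + x + x ^ 2 / 2))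
            + (Real.exp x - (1 + x)) * y + (Real.exp x - 1) * (y ^ 2 / 2) :=
          norm_add₄_le.trans <| add_le_add (add_le_add_three
            (norm_mul_le_of_le (ha.norm_le h1) hb.norm_remainder_le) ha.norm_remainder_le
            (norm_mul_le_of_le ha.norm_sub_one_sub_le hb.norm_first_le))
            (norm_mul_le_of_le ha.norm_sub_one_le hb.norm_second_le)
      _ = Real.exp (x + y) - (1 + (x + y) + (x + y) ^ 2 / 2) := by rw [Real.exp_add]; ring

theorem norm_sub_le (ha : IsExpMajorized a a₁ a₂ x) (hb : IsExpMajorized b a₁ a₂ y) :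
    ‖a - b‖ ≤ (Real.exp x - (1 + x + x ^ 2 / 2)) + (Real.exp y - (1 + y + y ^ 2 / 2)) := by
  rw [← sub_sub_sub_cancel_right a b (1 + a₁ + a₂)]
  exact norm_sub_le_of_le ha.norm_remainder_le hb.norm_remainder_le

end IsExpMajorized

end Majorant

section Exp

variable {𝕂 A : Type*} [RCLike 𝕂] [NormedRing A] [NormedAlgebra 𝕂 A] [CompleteSpace A]

open Nat in
theorem norm_exp_sub_quadratic_le (w : A) :
    ‖exp w - (1 + w + (2⁻¹ : 𝕂) • w ^ 2)‖ ≤ Real.exp ‖w‖ - (1 + ‖w‖ + ‖w‖ ^ 2 / 2) := by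
  have hs := (expSeries_summable' (𝕂 := 𝕂) w).sum_add_tsum_nat_add 3
  have hns := (summable_nat_add_iff 3).2 (norm_expSeries_summable' (𝕂 := 𝕂) w)
  have hjet : ∑ n ∈ Finset.range 3, (n !⁻¹ : 𝕂) • w ^ n = 1 + w + (2⁻¹ : 𝕂) • w ^ 2 := by
    norm_num [Finset.sum_range_succ]
  rw [exp_eq_tsum 𝕂]
  beta_reduce
  rw [← hs, hjet, add_sub_cancel_left, Real.exp_sub_quadratic_eq_tsum]
  refine (norm_tsum_le_tsum_norm hns).trans (Summable.tsum_le_tsum (fun n => ?_) hns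
    ((summable_nat_add_iff 3).2 (Real.summable_pow_div_factorial ‖w‖)))
  rw [norm_smul, norm_inv, RCLike.norm_natCast, inv_mul_eq_div]
  gcongr
  exact norm_pow_le' w (by omega)

theorem isExpMajorized_exp (w : A) : IsExpMajorized (exp w) w ((2⁻¹ : 𝕂) • w ^ 2) ‖w‖ where
  norm_first_le := le_rfl
  norm_second_le := by
    rw [norm_smul, norm_inv, RCLike.norm_ofNat, inv_mul_eq_div]
    gcongr
    exact norm_pow_le' w two_pos
  norm_remainder_le := norm_exp_sub_quadratic_le w

theorem isExpMajorized_prod_mul_reverse_prod (h1 : ‖(1 : A)‖ ≤ 1) (l : List A) :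
    IsExpMajorized ((l.map exp).prod * (l.map exp).reverse.prod) (l.sum + l.sum)
      ((2⁻¹ : 𝕂) • (l.sum + l.sum) ^ 2) (2 * (l.map norm).sum) := by
  induction l with
  | nil => simpa using isExpMajorized_one
  | cons w l ih =>
    have h := ((isExpMajorized_exp (𝕂 := 𝕂) w).mul h1 ih).mul h1 (isExpMajorized_exp (𝕂 := 𝕂) w)
    have hprod : ((w :: l).map exp).prod * ((w :: l).map exp).reverse.prod
        = exp w * ((l.map exp).prod * (l.map exp).reverse.prod) * exp w := by
      simp [mul_assoc]
    rw [hprod, List.sum_cons, List.map_cons, List.sum_cons]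
    convert h using 1
    · abel
    · simp only [sq, mul_add, add_mul, smul_add]
      module
    · ring

/-- Third-order local error bound for the symmetric (Strang) Trotter splitting:
there is an absolute constant `C > 0` such that for bounded operators
`L₁, …, L_m` with `‖Lⱼ‖ ≤ Λ`, the symmetrized product formula
`S₂(λ) = (∏ⱼ e^{(λ/2)Lⱼ})(∏ⱼ reversed e^{(λ/2)Lⱼ})` satisfies
`‖e^{λ ΣLⱼ} − S₂(λ)‖ ≤ C (mΛ|λ|)³ e^{mΛ|λ|}`. -/
theorem strang_splitting_third_order :
    ∃ C : ℝ, 0 < C ∧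
      ∀ (X : Type) [NormedAddCommGroup X] [NormedSpace ℂ X] [CompleteSpace X]
        (m : ℕ) (L : Fin m → (X →L[ℂ] X)) (Λ : ℝ)
        (_ : ∀ j, ‖L j‖ ≤ Λ) (lam : ℝ),
        ‖exp (lam • ∑ j, L j) -
            ((List.ofFn fun j : Fin m => exp ((lam / 2) • L j)).prod *
             (List.ofFn fun j : Fin m => exp ((lam / 2) • L j)).reverse.prod)‖ ≤
          C * ((m : ℝ) * Λ * |lam|) ^ 3 * Real.exp ((m : ℝ) * Λ * |lam|) := by
  refine ⟨1 / 3, by norm_num, fun X _ _ _ m L Λ hL lam => ?_⟩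
  set l := List.ofFn fun j => (lam / 2) • L j
  set y := (m : ℝ) * Λ * |lam|
  have hl : List.ofFn (fun j => exp ((lam / 2) • L j)) = l.map exp := by
    rw [List.map_ofFn]; rfl
  have hsum : lam • ∑ j, L j = l.sum + l.sum := by
    rw [List.sum_ofFn, ← Finset.smul_sum, ← add_smul, add_halves]
  have hsym := isExpMajorized_prod_mul_reverse_prod (𝕂 := ℂ) ContinuousLinearMap.norm_id_le l
  have hy : 2 * (l.map norm).sum ≤ y :=
    calc 2 * (l.map norm).sum = |lam| * ∑ j, ‖L j‖ := by
          simp only [l, List.map_ofFn, List.sum_ofFn, Function.comp_apply, norm_smul, norm_div,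
            Real.norm_eq_abs, Finset.mul_sum]
          exact Finset.sum_congr rfl fun _ _ => by ring
      _ ≤ |lam| * ∑ _j : Fin m, Λ := by gcongr; exact hL _
      _ = y := by rw [Finset.sum_const, Finset.card_univ, Fintype.card_fin, nsmul_eq_mul]; ring
  have hw : ‖l.sum + l.sum‖ ≤ y := hsym.norm_first_le.trans hy
  rw [hl, hsum]
  calc _ ≤ _ := (isExpMajorized_exp (𝕂 := ℂ) (l.sum + l.sum)).norm_sub_le hsym
    _ ≤ y ^ 3 * Real.exp y / 6 + y ^ 3 * Real.exp y / 6 := by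
      gcongr
      · exact Real.exp_sub_quadratic_le_of_le (norm_nonneg _) hw
      · exact Real.exp_sub_quadratic_le_of_le ((norm_nonneg _).trans hsym.norm_first_le) hy
    _ = _ := by ring
end Exp
end
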